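/- Let K(ε) = [[A, ε Bᵀ], [ε B, 0]] be an invertible (n+m)×(n+m) real matrix with A invertible and B A^{-1} Bᵀ invertible, N = n+m, and let C_0 = |det A · det(B A^{-1} Bᵀ)|. Then the 2-norm condition number satisfies κ_2(K(ε)) ≥ (‖A‖₂ / C_0^{1/N}) · ε^{−2m/N} for all ε > 0. In particular κ_2(K(ε)) → ∞ as ε → 0⁺. -/

import Mathlib

/-! By the Schur complement, `|det K(ε)| = ε^(2m) C₀`. For any `N × N` matrix `|det M| ≤ ‖M‖₂^N`,
since `det (Mᵀ M)` is the product of the eigenvalues of `Mᵀ M`, each at most `‖M‖₂²`. Applied to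
`K(ε)⁻¹` this gives `‖K(ε)⁻¹‖₂ ≥ (ε^(2m) C₀)^(-1/N)`, and `‖K(ε)‖₂ ≥ ‖A‖₂` because `A` is a block of
`K(ε)`. The resulting lower bound is a positive multiple of a negative power of `ε`. -/

open Matrix
open scoped Matrix.Norms.L2Operator

theorem Real.inv_pow_mul_rpow_one_div {ε c : ℝ} (hε : 0 ≤ ε) (hc : 0 ≤ c) (k : ℕ) (N : ℝ) :
    ((ε ^ k * c)⁻¹) ^ (1 / N) = ε ^ (-(k : ℝ) / N) / c ^ (1 / N) := by
  rw [mul_inv, Real.mul_rpow (by positivity) (by positivity), Real.inv_rpow (by positivity),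
    Real.inv_rpow hc, ← Real.rpow_natCast, ← Real.rpow_mul hε, ← Real.rpow_neg hε,
    div_eq_mul_inv _ (c ^ _), neg_div, mul_one_div]

namespace Matrix

variable {ι : Type*} [Fintype ι] [DecidableEq ι]

theorem PosSemidef.det_le_l2_opNorm_pow {H : Matrix ι ι ℝ} (hH : H.PosSemidef) :
    H.det ≤ ‖H‖ ^ Fintype.card ι := by
  have eigenvalue_le (i : ι) : hH.isHermitian.eigenvalues i ≤ ‖H‖ := by
    have : Nonempty ι := ⟨i⟩
    exact (le_abs_self _).trans
      (spectrum.norm_le_norm_of_mem (hH.isHermitian.eigenvalues_mem_spectrum_real i))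
  rw [hH.isHermitian.det_eq_prod_eigenvalues, ← Finset.card_univ, ← Finset.prod_const]
  simp only [RCLike.ofReal_real_eq_id, id]
  exact Finset.prod_le_prod (fun i _ => hH.eigenvalues_nonneg i) (fun i _ => eigenvalue_le i)

theorem abs_det_le_l2_opNorm_pow (M : Matrix ι ι ℝ) : |M.det| ≤ ‖M‖ ^ Fintype.card ι := by
  refine abs_le_of_sq_le_sq ?_ (by positivity)
  have h := (posSemidef_conjTranspose_mul_self M).det_le_l2_opNorm_pow
  rw [det_mul, det_conjTranspose, l2_opNorm_conjTranspose_mul_self] at h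
  simpa only [star_trivial, sq, mul_pow] using h

theorem inv_abs_det_le_l2_opNorm_inv_pow (M : Matrix ι ι ℝ) :
    |M.det|⁻¹ ≤ ‖M⁻¹‖ ^ Fintype.card ι := by
  simpa only [det_nonsing_inv, Ring.inverse_eq_inv', abs_inv] using abs_det_le_l2_opNorm_pow M⁻¹

theorem inv_abs_det_rpow_le_l2_opNorm_inv [Nonempty ι] (M : Matrix ι ι ℝ) :
    (|M.det|⁻¹) ^ ((1 : ℝ) / Fintype.card ι) ≤ ‖M⁻¹‖ := by
  rw [one_div, Real.rpow_inv_le_iff_of_pos (by positivity) (norm_nonneg _)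
    (by exact_mod_cast Fintype.card_pos), Real.rpow_natCast]
  exact inv_abs_det_le_l2_opNorm_inv_pow M

theorem l2_opNorm_le_l2_opNorm_fromBlocks {𝕜 l m n o : Type*} [RCLike 𝕜] [Fintype l] [Fintype m]
    [Fintype n] [Fintype o] [DecidableEq n] [DecidableEq o]
    (A : Matrix l n 𝕜) (B : Matrix l o 𝕜) (C : Matrix m n 𝕜) (D : Matrix m o 𝕜) :
    ‖A‖ ≤ ‖fromBlocks A B C D‖ := by
  rw [l2_opNorm_def]
  refine ContinuousLinearMap.opNorm_le_bound _ (norm_nonneg _) fun x => ?_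
  let y : EuclideanSpace 𝕜 (n ⊕ o) := WithLp.toLp 2 (Sum.elim x 0)
  have norm_y : ‖y‖ = ‖x‖ := by
    rw [← sq_eq_sq₀ (norm_nonneg _) (norm_nonneg _), EuclideanSpace.norm_sq_eq,
      EuclideanSpace.norm_sq_eq, Fintype.sum_sum_type]
    simp [y]
  have mulVec_y : fromBlocks A B C D *ᵥ y = Sum.elim (A *ᵥ x) (C *ᵥ x) := by
    simp [y, fromBlocks_mulVec]
  calc _ ≤ ‖(EuclideanSpace.equiv (l ⊕ m) 𝕜).symm (fromBlocks A B C D *ᵥ y)‖ := by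
        rw [← sq_le_sq₀ (norm_nonneg _) (norm_nonneg _), EuclideanSpace.norm_sq_eq,
          EuclideanSpace.norm_sq_eq, mulVec_y, Fintype.sum_sum_type]
        exact le_add_of_nonneg_right (by positivity)
    _ ≤ ‖fromBlocks A B C D‖ * ‖x‖ := norm_y ▸ l2_opNorm_mulVec _ y

theorem det_fromBlocks_smul_transpose_zero {R m n : Type*} [CommRing R] [Fintype m] [Fintype n]
    [DecidableEq m] [DecidableEq n] (A : Matrix n n R) [Invertible A] (B : Matrix m n R) (ε : R) :
    (fromBlocks A (ε • Bᵀ) (ε • B) 0).det =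
      (-ε ^ 2) ^ Fintype.card m * (A.det * (B * A⁻¹ * Bᵀ).det) := by
  have schur : (0 : Matrix m m R) - ε • B * ⅟A * ε • Bᵀ = (-ε ^ 2) • (B * A⁻¹ * Bᵀ) := by
    rw [zero_sub, smul_mul, smul_mul, Matrix.mul_smul, smul_smul, ← neg_smul, invOf_eq_nonsing_inv, sq]
  rw [det_fromBlocks₁₁, schur, det_smul]
  ring

end Matrix

theorem saddle_point_condition_number_general (n m : ℕ) (hm : 0 < m)
    (A : Matrix (Fin n) (Fin n) ℝ) (B : Matrix (Fin m) (Fin n) ℝ)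
    (hA : IsUnit A.det) (hS : IsUnit (B * A⁻¹ * Bᵀ).det)
    (K : ℝ → Matrix (Fin n ⊕ Fin m) (Fin n ⊕ Fin m) ℝ)
    (hK : ∀ ε, K ε = Matrix.fromBlocks A (ε • Bᵀ) (ε • B) 0)
    (C₀ : ℝ) (hC₀ : C₀ = |A.det * (B * A⁻¹ * Bᵀ).det|) :
    (∀ ε > 0, ‖A‖ / C₀ ^ ((1 : ℝ) / (n + m)) * ε ^ (-(2 * (m : ℝ)) / (n + m)) ≤
      ‖K ε‖ * ‖(K ε)⁻¹‖) ∧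
    Filter.Tendsto (fun ε => ‖K ε‖ * ‖(K ε)⁻¹‖)
      (nhdsWithin 0 (Set.Ioi 0)) Filter.atTop := by
  have : Invertible A := A.invertibleOfIsUnitDet hA
  have : NeZero m := ⟨hm.ne'⟩
  have hC₀_pos : 0 < C₀ := hC₀ ▸ abs_pos.mpr (mul_ne_zero hA.ne_zero hS.ne_zero)
  -- `A = 0` would give `A⁻¹ = 0`, hence `B * A⁻¹ * Bᵀ = 0`, which is singular as `m > 0`.
  have hA_norm : 0 < ‖A‖ := by
    refine norm_pos_iff.mpr fun hA0 => hS.ne_zero ?_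
    simp [hA0]
  have abs_det_K (ε : ℝ) : |(K ε).det| = ε ^ (2 * m) * C₀ := by
    rw [hK, det_fromBlocks_smul_transpose_zero, hC₀, abs_mul, abs_pow, abs_neg, Fintype.card_fin,
      pow_mul, abs_sq]
  have lower_bound (ε : ℝ) (hε : 0 < ε) :
      ‖A‖ / C₀ ^ ((1 : ℝ) / (n + m)) * ε ^ (-(2 * (m : ℝ)) / (n + m)) ≤
        ‖K ε‖ * ‖(K ε)⁻¹‖ := by
    calc _ = ‖A‖ * (|(K ε).det|⁻¹) ^ ((1 : ℝ) / Fintype.card (Fin n ⊕ Fin m)) := by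
          rw [abs_det_K, Real.inv_pow_mul_rpow_one_div hε.le hC₀_pos.le, Fintype.card_sum,
            Fintype.card_fin, Fintype.card_fin]
          push_cast
          ring
      _ ≤ ‖A‖ * ‖(K ε)⁻¹‖ := by gcongr; exact inv_abs_det_rpow_le_l2_opNorm_inv _
      _ ≤ ‖K ε‖ * ‖(K ε)⁻¹‖ := by
          gcongr
          exact hK ε ▸ l2_opNorm_le_l2_opNorm_fromBlocks _ _ _ _
  have exponent_neg : -(2 * (m : ℝ)) / (n + m) < 0 :=
    div_neg_of_neg_of_pos (neg_neg_of_pos (by positivity)) (by positivity)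
  exact ⟨lower_bound, Filter.tendsto_atTop_mono' _
    (Filter.eventually_of_mem self_mem_nhdsWithin lower_bound)
    ((tendsto_rpow_neg_nhdsGT_zero exponent_neg).const_mul_atTop
      (div_pos hA_norm (Real.rpow_pos_of_pos hC₀_pos _)))⟩

/-- Condition number lower bound for the saddle-point matrix `K(ε) = [[A, ε Bᵀ],[ε B, 0]]`:
with `A` and `B A⁻¹ Bᵀ` invertible, `N = n + m`, `C₀ = |det A * det (B A⁻¹ Bᵀ)|`,
the 2-norm condition number `κ₂(K(ε)) = ‖K(ε)‖₂ ‖K(ε)⁻¹‖₂` satisfies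
`κ₂(K(ε)) ≥ (‖A‖₂ / C₀^(1/N)) ε^(-2m/N)` for all `ε > 0`; in particular it tends to `∞`
as `ε → 0⁺`. -/
theorem saddle_point_condition_number (n m : ℕ) (hm : 0 < m)
    (A : Matrix (Fin n) (Fin n) ℝ) (B : Matrix (Fin m) (Fin n) ℝ)
    (hA : IsUnit A.det) (hS : IsUnit (B * A⁻¹ * Bᵀ).det)
    (K : ℝ → Matrix (Fin n ⊕ Fin m) (Fin n ⊕ Fin m) ℝ)
    (hK : ∀ ε, K ε = Matrix.fromBlocks A (ε • Bᵀ) (ε • B) 0)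
    (hKinv : ∀ ε > 0, IsUnit (K ε).det)
    (C₀ : ℝ) (hC₀ : C₀ = |A.det * (B * A⁻¹ * Bᵀ).det|) :
    (∀ ε > 0, ‖A‖ / C₀ ^ ((1 : ℝ) / (n + m)) * ε ^ (-(2 * (m : ℝ)) / (n + m)) ≤
      ‖K ε‖ * ‖(K ε)⁻¹‖) ∧
    Filter.Tendsto (fun ε => ‖K ε‖ * ‖(K ε)⁻¹‖)
      (nhdsWithin 0 (Set.Ioi 0)) Filter.atTop :=
  saddle_point_condition_number_general n m hm A B hA hS K hK C₀ hC₀
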